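/- arXiv:2208.09943 — 9 statements merged into one kernel-verified Lean document; each statement's English description precedes it below -/
import Mathlib

section
/- Let A be a C*-algebra and let I, J be algebraic (two-sided, not necessarily closed) ideals of A with J^⊥ ⊆ I. Then either J^⊥ = I or I ∩ J ≠ {0}. -/
/-- Two-sided annihilator of a subset of an algebra. -/
def ann {A : Type*} [NonUnitalNonAssocSemiring A] (X : Set A) : Set A :=
  {a | ∀ x ∈ X, a * x = 0 ∧ x * a = 0}

/-- A (not necessarily closed) two-sided ideal, as a subset. -/
def IsAlgIdeal {A : Type*} [NonUnitalNonAssocSemiring A] (J : Set A) : Prop :=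
  (0 : A) ∈ J ∧ (∀ x ∈ J, ∀ y ∈ J, x + y ∈ J) ∧ ∀ a : A, ∀ x ∈ J, a * x ∈ J ∧ x * a ∈ J

/-- If `I, J` are algebraic two-sided ideals of a C*-algebra with `J^⊥ ⊆ I`,
then either `J^⊥ = I` or `I ∩ J ≠ {0}`. -/
theorem annihilator_eq_or_inter_ne_zero {A : Type*} [NonUnitalNormedRing A] [StarRing A]
    [CStarRing A] [CompleteSpace A] [NormedSpace ℂ A] [IsScalarTower ℂ A A]
    [SMulCommClass ℂ A A] [StarModule ℂ A]
    (I J : Set A) (hI : IsAlgIdeal I) (hJ : IsAlgIdeal J) (h : ann J ⊆ I) :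
    ann J = I ∨ I ∩ J ≠ {0} := by
  by_cases h0 : I ∩ J = {0}
  · left
    apply Set.Subset.antisymm h
    intro a ha x hx
    constructor
    · have h1 : a * x ∈ I ∩ J := ⟨(hI.2.2 x a ha).2, (hJ.2.2 a x hx).1⟩
      rw [h0] at h1; exact h1
    · have h1 : x * a ∈ I ∩ J := ⟨(hI.2.2 x a ha).1, (hJ.2.2 a x hx).2⟩
      rw [h0] at h1; exact h1
  · right; exact h0
end

section
/- Let X be a locally compact Hausdorff space and U ⊆ X an open set. The ideal C₀(U) of C₀(X) is a regular ideal (i.e., equals its double annihilator) if and only if U is a regular open set in X. -/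
/-!
For open `V`, Urysohn bump functions supported in `V` show that `a` annihilates `C₀(V)` exactly
when `a` vanishes on `V`, i.e. on `closure V`; hence `C₀(V)^⊥ = C₀((closure V)ᶜ)`. Applying this
twice gives `C₀(U)^⊥⊥ = C₀(interior (closure U))`, and bump functions again show that `V ↦ C₀(V)`
is injective on open sets.
-/

open ZeroAtInfty

open Set

section

variable {X : Type*} [TopologicalSpace X] (𝕜 : Type*) [RCLike 𝕜]

def vanishingOutside (U : Set X) : Set C₀(X, 𝕜) :=
  {f | ∀ x ∉ U, f x = 0}

variable {𝕜} [RegularSpace X] [LocallyCompactSpace X]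

theorem exists_mem_vanishingOutside_eq_one {U : Set X} (hU : IsOpen U) {x : X} (hx : x ∈ U) :
    ∃ f ∈ vanishingOutside 𝕜 U, f x = 1 := by
  obtain ⟨g, hg_one, hg_zero, hg_supp, -⟩ := exists_continuous_one_zero_of_isCompact
    isCompact_singleton hU.isClosed_compl (disjoint_singleton_left.mpr fun h => h hx)
  refine ⟨⟨⟨fun y => (g y : 𝕜), by fun_prop⟩,
    (hg_supp.comp_left (g := ((↑) : ℝ → 𝕜)) RCLike.ofReal_zero).is_zero_at_infty⟩,
    fun y hy => ?_, ?_⟩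
  · simp [hg_zero hy]
  · simp [hg_one (mem_singleton x)]

theorem vanishingOutside_subset_iff {U V : Set X} (hU : IsOpen U) :
    vanishingOutside 𝕜 U ⊆ vanishingOutside 𝕜 V ↔ U ⊆ V := by
  refine ⟨fun h x hxU => ?_, fun h f hf x hxV => hf x fun hxU => hxV (h hxU)⟩
  by_contra hxV
  obtain ⟨f, hf, hfx⟩ := exists_mem_vanishingOutside_eq_one (𝕜 := 𝕜) hU hxU
  exact one_ne_zero (hfx ▸ h hf x hxV)

theorem vanishingOutside_inj {U V : Set X} (hU : IsOpen U) (hV : IsOpen V) :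
    vanishingOutside 𝕜 U = vanishingOutside 𝕜 V ↔ U = V := by
  simp only [subset_antisymm_iff, vanishingOutside_subset_iff hU, vanishingOutside_subset_iff hV]

theorem ann_vanishingOutside {V : Set X} (hV : IsOpen V) :
    ann (vanishingOutside 𝕜 V) = vanishingOutside 𝕜 (closure V)ᶜ := by
  ext a
  constructor
  · intro ha x hx
    have h_on : ∀ y ∈ V, a y = 0 := fun y hy => by
      obtain ⟨f, hf, hfy⟩ := exists_mem_vanishingOutside_eq_one (𝕜 := 𝕜) hV hy
      simpa [hfy] using congrArg (· y) (ha f hf).1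
    exact closure_minimal h_on (isClosed_eq (map_continuous a) continuous_const) (not_not.mp hx)
  · intro ha f hf
    have h_prod : ∀ y, a y * f y = 0 := fun y => by
      by_cases hy : y ∈ closure V
      · simp [ha y (not_not.mpr hy)]
      · simp [hf y fun h => hy (subset_closure h)]
    exact ⟨ZeroAtInftyContinuousMap.ext h_prod, ZeroAtInftyContinuousMap.ext fun y => (mul_comm _ _).trans (h_prod y)⟩

theorem ann_ann_vanishingOutside {U : Set X} (hU : IsOpen U) :
    ann (ann (vanishingOutside 𝕜 U)) = vanishingOutside 𝕜 (interior (closure U)) := by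
  rw [ann_vanishingOutside hU, ann_vanishingOutside isClosed_closure.isOpen_compl,
    closure_compl, compl_compl]

end

/-- For a locally compact Hausdorff space `X` and an open set `U ⊆ X`, the ideal
`C₀(U)` of `C₀(X)` equals its double annihilator if and only if `U` is a regular open set. -/
theorem cZero_regularIdeal_iff {X : Type*} [TopologicalSpace X] [LocallyCompactSpace X]
    [T2Space X] (U : Set X) (hU : IsOpen U) :
    ({f : C₀(X, ℂ) | ∀ x ∉ U, f x = 0} =
      ann (ann {f : C₀(X, ℂ) | ∀ x ∉ U, f x = 0})) ↔ U = interior (closure U) := by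
  change vanishingOutside ℂ U = ann (ann (vanishingOutside ℂ U)) ↔ _
  rw [ann_ann_vanishingOutside hU, vanishingOutside_inj hU isOpen_interior]
end

section
/- Let B ⊆ A be an inclusion of C*-algebras and E : A → B a faithful conditional expectation. Then for any closed two-sided ideal J of A, J^⊥ ∩ B = E(J)^{⊥_B}, where the second annihilator is computed inside B. -/
/-- A closed two-sided ideal. -/
def IsIdeal {A : Type*} [NonUnitalNormedRing A] (J : Set A) : Prop :=
  IsAlgIdeal J ∧ IsClosed J

/-- A regular ideal: a closed two-sided ideal equal to its double annihilator. -/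
def IsRegularIdeal {A : Type*} [NonUnitalNormedRing A] (J : Set A) : Prop :=
  IsIdeal J ∧ J = ann (ann J)

variable {A : Type*} [NonUnitalNormedRing A] [StarRing A] [CStarRing A] [CompleteSpace A]
  [NormedSpace ℂ A] [IsScalarTower ℂ A A] [SMulCommClass ℂ A A] [StarModule ℂ A]
  [PartialOrder A] [StarOrderedRing A]

/-- `B` is a (non-unital, closed, star-closed) C*-subalgebra of `A`. -/
def IsCStarSubalgebra (B : Set A) : Prop :=
  (0 : A) ∈ B ∧ (∀ x ∈ B, ∀ y ∈ B, x + y ∈ B) ∧ (∀ x ∈ B, ∀ y ∈ B, x * y ∈ B) ∧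
  (∀ (c : ℂ), ∀ x ∈ B, c • x ∈ B) ∧ (∀ x ∈ B, star x ∈ B) ∧ IsClosed B

/-- `B` contains an approximate unit for `A`. -/
def ContainsApproxUnit (B : Set A) : Prop :=
  ∀ a : A, ∀ ε > (0 : ℝ), ∃ b ∈ B, ‖b‖ ≤ 1 ∧ ‖a - b * a‖ < ε ∧ ‖a - a * b‖ < ε

/-- `B ⊆ A` is an inclusion of C*-algebras: a C*-subalgebra containing an
approximate unit for `A`. -/
def IsCStarInclusion (B : Set A) : Prop :=
  IsCStarSubalgebra B ∧ ContainsApproxUnit B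

/-- `n` is a normalizer of `B` in `A`: `nBn* ⊆ B` and `n*Bn ⊆ B`. -/
def IsNormalizer (B : Set A) (n : A) : Prop :=
  (∀ b ∈ B, n * b * star n ∈ B) ∧ (∀ b ∈ B, star n * b * n ∈ B)

/-- `B ⊆ A` is a regular inclusion: an inclusion whose normalizers span a dense
subspace of `A`. -/
def IsRegularInclusion (B : Set A) : Prop :=
  IsCStarInclusion B ∧
  closure (Submodule.span ℂ {n | IsNormalizer B n} : Set A) = Set.univ

/-- `E : A → A` is a conditional expectation onto `B`. -/
def IsCondExp (B : Set A) (E : A → A) : Prop :=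
  (∀ a, E a ∈ B) ∧ (∀ b ∈ B, E b = b) ∧
  (∀ x y, E (x + y) = E x + E y) ∧ (∀ (c : ℂ) (x : A), E (c • x) = c • E x) ∧
  (∀ a : A, 0 ≤ a → 0 ≤ E a) ∧ (∀ a, ‖E a‖ ≤ ‖a‖) ∧
  (∀ b ∈ B, ∀ a, E (b * a) = b * E a ∧ E (a * b) = E a * b)

/-- Faithfulness of a positive map: `E(a*a) = 0 → a = 0`. -/
def IsFaithful (E : A → A) : Prop := ∀ a, E (star a * a) = 0 → a = 0

/-- `N` is a `*`-semigroup of normalizers of `B` with dense linear span in `A`. -/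
def IsNormalizerSemigroup (B N : Set A) : Prop :=
  (∀ n ∈ N, IsNormalizer B n) ∧ (∀ n ∈ N, star n ∈ N) ∧
  (∀ m ∈ N, ∀ n ∈ N, m * n ∈ N) ∧
  closure (Submodule.span ℂ N : Set A) = Set.univ

/-- `K` is invariant under `N`: `nKn* ⊆ K` for all `n ∈ N`. -/
def InvariantUnder (N K : Set A) : Prop := ∀ n ∈ N, ∀ k ∈ K, n * k * star n ∈ K

/-- `E` is `N`-invariant: `E(nan*) = nE(a)n*` for all `n ∈ N`. -/
def IsInvariantCondExp (N : Set A) (E : A → A) : Prop :=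
  ∀ n ∈ N, ∀ a : A, E (n * a * star n) = n * E a * star n

/-- A closed two-sided ideal of the subalgebra `B`. -/
def IsIdealIn (B K : Set A) : Prop :=
  K ⊆ B ∧ (0 : A) ∈ K ∧ (∀ x ∈ K, ∀ y ∈ K, x + y ∈ K) ∧
  (∀ b ∈ B, ∀ x ∈ K, b * x ∈ K ∧ x * b ∈ K) ∧ IsClosed K

/-- A regular ideal of the subalgebra `B`: `K = K^{⊥_B ⊥_B}` with annihilators
computed inside `B`. -/
def IsRegularIdealIn (B K : Set A) : Prop :=
  IsIdealIn B K ∧ K = ann (ann K ∩ B) ∩ B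

/-- `B ⊆ A` has the ideal intersection property. -/
def HasIIP (B : Set A) : Prop :=
  ∀ J : Set A, IsIdeal J → J ≠ {0} → ∃ x ∈ J ∩ B, x ≠ 0

/-- `B ⊆ A` has the regular ideal intersection property. -/
def HasRIIP (B : Set A) : Prop :=
  ∀ J : Set A, IsRegularIdeal J → J ≠ {0} → ∃ x ∈ J ∩ B, x ≠ 0

/-- If `E : A → B` is a faithful conditional expectation, then for any closed
two-sided ideal `J` of `A`, `J^⊥ ∩ B = E(J)^{⊥_B}`. -/
theorem ann_inter_eq_ann_image {B : Set A} (hB : IsCStarInclusion B) (E : A → A)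
    (hE : IsCondExp B E) (hEf : IsFaithful E) (J : Set A) (hJ : IsIdeal J) :
    ann J ∩ B = ann (E '' J) ∩ B := by
  have hE0 : E 0 = 0 := hE.2.1 0 hB.1.1
  ext b
  simp only [Set.mem_inter_iff, ann, Set.mem_setOf_eq]
  constructor
  · rintro ⟨hbJ, hbB⟩
    refine ⟨?_, hbB⟩
    rintro _ ⟨x, hx, rfl⟩
    obtain ⟨h1, h2⟩ := hbJ x hx
    exact ⟨by rw [← (hE.2.2.2.2.2.2 b hbB x).1, h1, hE0],
           by rw [← (hE.2.2.2.2.2.2 b hbB x).2, h2, hE0]⟩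
  · rintro ⟨hbE, hbB⟩
    refine ⟨?_, hbB⟩
    intro x hx
    have hbs : star b ∈ B := hB.1.2.2.2.2.1 b hbB
    constructor
    · -- b * x = 0
      have hxx : x * star x ∈ J := (hJ.1.2.2 (star x) x hx).2
      have h1 : b * E (x * star x) = 0 := (hbE _ ⟨_, hxx, rfl⟩).1
      have key : E (star (star x * star b) * (star x * star b)) = 0 := by
        have heq : star (star x * star b) * (star x * star b)
            = b * ((x * star x) * star b) := by
          simp [mul_assoc]
        rw [heq, (hE.2.2.2.2.2.2 b hbB _).1, (hE.2.2.2.2.2.2 (star b) hbs _).2,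
          ← mul_assoc, h1, zero_mul]
      have hz := hEf _ key
      have : star (star x * star b) = star (0 : A) := by rw [hz]
      simpa using this
    · -- x * b = 0
      have hxx : star x * x ∈ J := (hJ.1.2.2 (star x) x hx).1
      have h1 : E (star x * x) * b = 0 := (hbE _ ⟨_, hxx, rfl⟩).2
      have key : E (star (x * b) * (x * b)) = 0 := by
        have heq : star (x * b) * (x * b) = star b * ((star x * x) * b) := by
          simp [mul_assoc]
        rw [heq, (hE.2.2.2.2.2.2 (star b) hbs _).1, (hE.2.2.2.2.2.2 b hbB _).2,
          h1, mul_zero]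
      exact hEf _ key
end

section
/- Let B ⊆ A be an inclusion of C*-algebras with a faithful conditional expectation E : A → B. If J is a regular ideal of A (i.e., J = J^{⊥⊥}), then J ∩ B is a regular ideal of B. -/
variable {A : Type*} [NonUnitalNormedRing A] [StarRing A] [CStarRing A] [CompleteSpace A]
  [NormedSpace ℂ A] [IsScalarTower ℂ A A] [SMulCommClass ℂ A A] [StarModule ℂ A]
  [PartialOrder A] [StarOrderedRing A]

/-- If `E : A → B` is a faithful conditional expectation and `J` is a regular
ideal of `A`, then `J ∩ B` is a regular ideal of `B`. -/
theorem inter_isRegularIdealIn {B : Set A} (hB : IsCStarInclusion B) (E : A → A)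
    (hE : IsCondExp B E) (hEf : IsFaithful E) (J : Set A) (hJ : IsRegularIdeal J) :
    IsRegularIdealIn B (J ∩ B) := by
  obtain ⟨⟨⟨hJ0, hJadd, hJmul⟩, hJcl⟩, hJreg⟩ := hJ
  obtain ⟨⟨hB0, hBadd, hBmul, hBsmul, hBstar, hBcl⟩, _⟩ := hB
  obtain ⟨hEmem, hEid, hEadd, hEsmul, hEpos, hEnorm, hEmod⟩ := hE
  have hE0 : E 0 = 0 := by
    have := hEsmul 0 0
    simpa using this
  constructor
  · exact ⟨Set.inter_subset_right, ⟨hJ0, hB0⟩,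
      fun x hx y hy => ⟨hJadd x hx.1 y hy.1, hBadd x hx.2 y hy.2⟩,
      fun c hc x hx => ⟨⟨(hJmul c x hx.1).1, hBmul c hc x hx.2⟩,
        ⟨(hJmul c x hx.1).2, hBmul x hx.2 c hc⟩⟩,
      hJcl.inter hBcl⟩
  · apply Set.Subset.antisymm
    · rintro x ⟨hxJ, hxB⟩
      refine ⟨fun z hz => ?_, hxB⟩
      exact ⟨(hz.1 x ⟨hxJ, hxB⟩).2, (hz.1 x ⟨hxJ, hxB⟩).1⟩
    · rintro b ⟨hbann, hbB⟩
      refine ⟨?_, hbB⟩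
      rw [hJreg]
      -- b annihilates E c for every c ∈ ann J
      have key : ∀ c ∈ ann J, b * E c = 0 ∧ E c * b = 0 := by
        intro c hc
        apply hbann
        refine ⟨fun k hk => ?_, hEmem c⟩
        constructor
        · have h1 := (hEmod k hk.2 c).2
          rw [(hc k hk.1).1, hE0] at h1
          exact h1.symm
        · have h1 := (hEmod k hk.2 c).1
          rw [(hc k hk.1).2, hE0] at h1
          exact h1.symm
      -- ann J is a two-sided ideal of A
      have hann : ∀ c : A, ∀ a ∈ ann J, c * a ∈ ann J ∧ a * c ∈ ann J := by
        intro c a ha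
        constructor
        · intro j hj
          refine ⟨?_, ?_⟩
          · rw [mul_assoc, (ha j hj).1, mul_zero]
          · rw [← mul_assoc]; exact (ha _ (hJmul c j hj).2).2
        · intro j hj
          refine ⟨?_, ?_⟩
          · rw [mul_assoc]; exact (ha _ (hJmul c j hj).1).1
          · rw [← mul_assoc, (ha j hj).2, zero_mul]
      intro a ha
      constructor
      · -- b * a = 0
        have hmem : a * star a ∈ ann J := (hann (star a) a ha).2
        have h2 : b * E (a * star a) = 0 := (key _ hmem).1
        have hx : E (star (star (b * a)) * star (b * a)) = 0 := by
          have e1 : star (star (b * a)) * star (b * a) = b * ((a * star a) * star b) := by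
            simp [star_mul, mul_assoc]
          rw [e1, (hEmod b hbB _).1, (hEmod (star b) (hBstar b hbB) _).2, ← mul_assoc, h2,
            zero_mul]
        have := hEf _ hx
        have : b * a = 0 := by
          have h := congrArg star this
          simpa using h
        exact this
      · -- a * b = 0
        have hmem : star a * a ∈ ann J := (hann (star a) a ha).1
        have h2 : E (star a * a) * b = 0 := (key _ hmem).2
        have hx : E (star (a * b) * (a * b)) = 0 := by
          have e1 : star (a * b) * (a * b) = star b * ((star a * a) * b) := by
            simp [star_mul, mul_assoc]
          rw [e1, (hEmod (star b) (hBstar b hbB) _).1, (hEmod b hbB _).2, h2, mul_zero]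
        exact hEf _ hx
end

section
/- Let B ⊆ A be a regular inclusion of C*-algebras, N a *-semigroup of normalizers of B with dense span in A, and E : A → B a faithful N-invariant conditional expectation. If K is an N-invariant closed ideal of B, then J_K := {a ∈ A : E(a*a) ∈ K} is a closed two-sided ideal of A with J_K ∩ B = K. -/
variable {A : Type*} [NonUnitalNormedRing A] [StarRing A] [CStarRing A] [CompleteSpace A]
  [NormedSpace ℂ A] [IsScalarTower ℂ A A] [SMulCommClass ℂ A A] [StarModule ℂ A]
  [PartialOrder A] [StarOrderedRing A]

/-!
The map `a ↦ E (a⋆a)` is monotone, and `K` is hereditary in `B`: if `x ∈ B` and `0 ≤ x ≤ y ∈ K`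
then `x ∈ K`. Hence `J_K` is closed under sums (parallelogram law) and under left multiplication
(`(xa)⋆(xa) ≤ ‖x⋆x‖ a⋆a`). The `N`-invariance of `E` and of `K` makes `J_K` stable under right
multiplication by `N`, and as `J_K` is a closed subspace and `N` has dense span, `J_K` is a right
ideal too. Heredity of `K` comes from the elements `1 - (1 - y / M)ⁿ ∈ K` (computed in the
unitization), which form a right approximate unit for every `z` with `z⋆z ≤ y`.
-/
open Filter Topology

theorem pow_mul_one_sub_le_one_div {t : ℝ} (h0 : 0 ≤ t) (h1 : t ≤ 1) (n : ℕ) :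
    t ^ n * (1 - t) ≤ 1 / (n + 1) := by
  have hsum : (n + 1) * t ^ n ≤ ∑ i ∈ Finset.range (n + 1), t ^ i := by
    calc (n + 1) * t ^ n = ∑ _i ∈ Finset.range (n + 1), t ^ n := by simp
      _ ≤ ∑ i ∈ Finset.range (n + 1), t ^ i :=
        Finset.sum_le_sum fun i hi ↦ pow_le_pow_of_le_one h0 h1 (Finset.mem_range_succ_iff.1 hi)
  rw [le_div_iff₀ (by positivity)]
  calc t ^ n * (1 - t) * (n + 1) = (1 - t) * ((n + 1) * t ^ n) := by ring
    _ ≤ (1 - t) * ∑ i ∈ Finset.range (n + 1), t ^ i := by gcongr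
    _ = 1 - t ^ (n + 1) := mul_neg_geom_sum t (n + 1)
    _ ≤ 1 := by linarith [pow_nonneg h0 (n + 1)]

namespace CStarAlgebra

theorem mul_self_le_norm_smul {C : Type*} [NonUnitalCStarAlgebra C] [PartialOrder C]
    [StarOrderedRing C] {x : C} (hx : 0 ≤ x) : x * x ≤ ‖x‖ • x := by
  obtain ⟨s, hs, rfl⟩ : ∃ s : C, 0 ≤ s ∧ s * s = x :=
    ⟨CFC.sqrt x, CFC.sqrt_nonneg x, CFC.sqrt_mul_sqrt_self x hx⟩
  have hs' : star s = s := hs.isSelfAdjoint.star_eq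
  calc s * s * (s * s) = star s * (s * s) * s := by simp only [hs', mul_assoc]
    _ ≤ ‖s * s‖ • (star s * s) := star_left_conjugate_le_norm_smul (.of_nonneg hx)
    _ = ‖s * s‖ • (s * s) := by rw [hs']

variable {C : Type*} [CStarAlgebra C] [PartialOrder C] [StarOrderedRing C] {u : C}

theorem norm_pow_mul_one_sub_le (hu0 : 0 ≤ u) (hu1 : u ≤ 1) (n : ℕ) :
    ‖u ^ n * (1 - u)‖ ≤ 1 / (n + 1) := by
  have hcfc : u ^ n * (1 - u) = cfc (fun t : ℝ ↦ t ^ n * (1 - t)) u := by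
    rw [cfc_mul .., cfc_pow_id .., cfc_sub .., cfc_const_one .., cfc_id' ..]
  rw [hcfc]
  refine norm_cfc_le (by positivity) fun t ht ↦ ?_
  have ht0 : 0 ≤ t := spectrum_nonneg_of_nonneg hu0 ht
  have ht1 : t ≤ 1 := (le_algebraMap_iff_spectrum_le (.of_nonneg hu0)).1 (by simpa using hu1) t ht
  rw [Real.norm_of_nonneg (mul_nonneg (_root_.pow_nonneg ht0 n) (sub_nonneg.2 ht1))]
  exact pow_mul_one_sub_le_one_div ht0 ht1 n

theorem norm_mul_pow_sq_le {z : C} {M : ℝ} (hM : 0 ≤ M) (hu0 : 0 ≤ u) (hu1 : u ≤ 1)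
    (hz : star z * z ≤ M • (1 - u)) (n : ℕ) : ‖z * u ^ n‖ ^ 2 ≤ M / (n + 1) := by
  have hun : star (u ^ n) = u ^ n := ((IsSelfAdjoint.of_nonneg hu0).pow n).star_eq
  have hconj : u ^ n * (star z * z) * u ^ n ≤ M • (u ^ (2 * n) * (1 - u)) := by
    calc u ^ n * (star z * z) * u ^ n ≤ u ^ n * (M • (1 - u)) * u ^ n := by
          simpa only [hun] using star_left_conjugate_le_conjugate hz (u ^ n)
      _ = M • (u ^ (2 * n) * (1 - u)) := by
          rw [two_mul, pow_add, mul_smul_comm, smul_mul_assoc]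
          simp only [mul_sub, sub_mul, mul_one, mul_assoc, ← pow_succ, pow_mul_comm u (n + 1) n]
  have hconj0 : 0 ≤ u ^ n * (star z * z) * u ^ n := by
    simpa only [hun] using star_left_conjugate_nonneg (star_mul_self_nonneg z) (u ^ n)
  calc ‖z * u ^ n‖ ^ 2 = ‖u ^ n * (star z * z) * u ^ n‖ := by
        rw [sq, ← CStarRing.norm_star_mul_self, star_mul, hun]; simp only [mul_assoc]
    _ ≤ ‖M • (u ^ (2 * n) * (1 - u))‖ := norm_le_norm_of_nonneg_of_le hconj0 hconj
    _ = M * ‖u ^ (2 * n) * (1 - u)‖ := by rw [norm_smul, Real.norm_of_nonneg hM]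
    _ ≤ M * (1 / (2 * n + 1)) := by
        gcongr; exact_mod_cast norm_pow_mul_one_sub_le hu0 hu1 (2 * n)
    _ ≤ M / (n + 1) := by
        rw [mul_one_div]; gcongr; linarith [(n.cast_nonneg : (0 : ℝ) ≤ n)]

end CStarAlgebra

namespace IsIdealIn

section NormedRing

variable {R : Type*} [NonUnitalNormedRing R] {B K : Set R} {x y : R}

theorem subset (hK : IsIdealIn B K) : K ⊆ B := hK.1

protected theorem zero_mem (hK : IsIdealIn B K) : (0 : R) ∈ K := hK.2.1

protected theorem add_mem (hK : IsIdealIn B K) (hx : x ∈ K) (hy : y ∈ K) : x + y ∈ K :=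
  hK.2.2.1 x hx y hy

protected theorem mul_mem_left (hK : IsIdealIn B K) (hx : x ∈ B) (hy : y ∈ K) : x * y ∈ K :=
  (hK.2.2.2.1 x hx y hy).1

protected theorem mul_mem_right (hK : IsIdealIn B K) (hx : x ∈ K) (hy : y ∈ B) : x * y ∈ K :=
  (hK.2.2.2.1 y hy x hx).2

protected theorem isClosed (hK : IsIdealIn B K) : IsClosed K := hK.2.2.2.2

variable [StarRing R] [NormedSpace ℂ R] [IsScalarTower ℂ R R]

theorem smul_mem (hB : IsCStarInclusion B) (hK : IsIdealIn B K) (c : ℂ) (hx : x ∈ K) :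
    c • x ∈ K := by
  rcases eq_or_ne c 0 with rfl | hc
  · simpa using hK.zero_mem
  have hc' : 0 < ‖c‖ := norm_pos_iff.2 hc
  refine hK.isClosed.closure_subset (Metric.mem_closure_iff.2 fun ε hε ↦ ?_)
  obtain ⟨b, hb, -, hbx, -⟩ := hB.2 x (ε / ‖c‖) (by positivity)
  refine ⟨(c • b) * x, hK.mul_mem_left (hB.1.2.2.2.1 c b hb) hx, ?_⟩
  rw [dist_eq_norm, smul_mul_assoc, ← smul_sub, norm_smul]
  calc ‖c‖ * ‖x - b * x‖ < ‖c‖ * (ε / ‖c‖) := by gcongr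
    _ = ε := mul_div_cancel₀ ε hc'.ne'

theorem real_smul_mem (hB : IsCStarInclusion B) (hK : IsIdealIn B K) (r : ℝ) (hx : x ∈ K) :
    r • x ∈ K := by
  simpa only [Complex.coe_smul] using hK.smul_mem hB r hx

protected theorem sub_mem (hB : IsCStarInclusion B) (hK : IsIdealIn B K) (hx : x ∈ K)
    (hy : y ∈ K) : x - y ∈ K := by
  simpa only [neg_one_smul, ← sub_eq_add_neg] using hK.add_mem hx (hK.smul_mem hB (-1) hy)

end NormedRing

open Unitization

variable {C : Type*} [NonUnitalCStarAlgebra C] {B K : Set C} {x y z : C}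

theorem exists_inr_eq_one_sub_pow (hB : IsCStarInclusion B) (hK : IsIdealIn B K) (hx : x ∈ K)
    (n : ℕ) : ∃ k ∈ K, (k : Unitization ℂ C) = 1 - (1 - (x : Unitization ℂ C)) ^ n := by
  induction n with
  | zero => exact ⟨0, hK.zero_mem, by simp⟩
  | succ n ih =>
    obtain ⟨k, hk, hkn⟩ := ih
    have hpow : (1 - (x : Unitization ℂ C)) ^ n = 1 - k := by rw [hkn, sub_sub_cancel]
    refine ⟨k + x - k * x, hK.sub_mem hB (hK.add_mem hk hx) (hK.mul_mem_right hk (hK.subset hx)),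
      ?_⟩
    rw [pow_succ, hpow, inr_sub ℂ, inr_add ℂ, inr_mul ℂ]
    noncomm_ring

variable [PartialOrder C] [StarOrderedRing C]

/-- With `u = 1 - y / M` in the unitization, `k n = 1 - uⁿ` lies in `K` and
`‖z - z (k n)‖² = ‖z uⁿ‖² ≤ M / (n + 1)`. -/
theorem exists_tendsto_mul (hB : IsCStarInclusion B) (hK : IsIdealIn B K) (hy : y ∈ K)
    (hy0 : 0 ≤ y) (hzy : star z * z ≤ y) :
    ∃ k : ℕ → C, (∀ n, k n ∈ K) ∧ Tendsto (fun n ↦ z * k n) atTop (𝓝 z) := by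
  set M := ‖y‖ + 1
  have hM : 0 < M := by positivity
  set c := M⁻¹ • y
  have hc0 : 0 ≤ (c : Unitization ℂ C) := inr_nonneg_iff.2 (smul_nonneg (by positivity) hy0)
  have hc1 : (c : Unitization ℂ C) ≤ 1 := by
    refine (CStarAlgebra.norm_le_one_iff_of_nonneg _ hc0).1 ?_
    rw [norm_inr, norm_smul, norm_inv, Real.norm_of_nonneg hM.le, inv_mul_le_one₀ hM]
    linarith
  have hzc : star (z : Unitization ℂ C) * z ≤ M • (1 - (1 - (c : Unitization ℂ C))) := by
    rw [sub_sub_cancel, ← inr_smul ℂ, smul_inv_smul₀ hM.ne', ← inr_star, ← inr_mul ℂ,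
      inr_le_iff _ _ (.star_mul_self z) (.of_nonneg hy0)]
    exact hzy
  have hcK : c ∈ K := hK.real_smul_mem hB M⁻¹ hy
  choose k hkK hk using hK.exists_inr_eq_one_sub_pow hB hcK
  refine ⟨k, hkK, tendsto_iff_norm_sub_tendsto_zero.2 ?_⟩
  refine squeeze_zero (g := fun n : ℕ ↦ √(M / (n + 1))) (fun _ ↦ norm_nonneg _) (fun n ↦ ?_) ?_
  · have hnorm :
        ‖z * k n - z‖ = ‖(z : Unitization ℂ C) * (1 - (c : Unitization ℂ C)) ^ n‖ := by
      rw [← norm_inr (𝕜 := ℂ), inr_sub ℂ, inr_mul ℂ, hk n, ← norm_neg]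
      noncomm_ring
    rw [hnorm, ← abs_norm]
    exact Real.abs_le_sqrt (CStarAlgebra.norm_mul_pow_sq_le hM.le (sub_nonneg.2 hc1)
      (sub_le_self 1 hc0) hzc n)
  · simpa [div_eq_mul_inv] using
      ((tendsto_one_div_add_atTop_nhds_zero_nat (𝕜 := ℝ)).const_mul M).sqrt

theorem mem_of_star_mul_self_le (hB : IsCStarInclusion B) (hK : IsIdealIn B K) (hzB : z ∈ B)
    (hy : y ∈ K) (hy0 : 0 ≤ y) (hzy : star z * z ≤ y) : z ∈ K := by
  obtain ⟨k, hkK, hlim⟩ := hK.exists_tendsto_mul hB hy hy0 hzy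
  exact hK.isClosed.mem_of_tendsto hlim (Eventually.of_forall fun n ↦ hK.mul_mem_left hzB (hkK n))

theorem mem_of_nonneg_of_le (hB : IsCStarInclusion B) (hK : IsIdealIn B K) (hxB : x ∈ B)
    (hx : 0 ≤ x) (hxy : x ≤ y) (hy : y ∈ K) : x ∈ K := by
  refine hK.mem_of_star_mul_self_le hB hxB (hK.real_smul_mem hB ‖x‖ hy)
    (smul_nonneg (norm_nonneg x) (hx.trans hxy)) ?_
  calc star x * x = x * x := by rw [(IsSelfAdjoint.of_nonneg hx).star_eq]
    _ ≤ ‖x‖ • x := CStarAlgebra.mul_self_le_norm_smul hx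
    _ ≤ ‖x‖ • y := smul_le_smul_of_nonneg_left hxy (norm_nonneg x)

end IsIdealIn

namespace IsCondExp

variable {R : Type*} [NonUnitalNormedRing R] [NormedSpace ℂ R] [PartialOrder R] {B : Set R}
  {E : R → R}

def toLinearMap (hE : IsCondExp B E) : R →ₗ[ℂ] R where
  toFun := E
  map_add' := hE.2.2.1
  map_smul' := hE.2.2.2.1

theorem apply_mem (hE : IsCondExp B E) (a : R) : E a ∈ B := hE.1 a

theorem map_of_mem (hE : IsCondExp B E) {b : R} (hb : b ∈ B) : E b = b := hE.2.1 b hb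

protected theorem map_zero (hE : IsCondExp B E) : E 0 = 0 := hE.toLinearMap.map_zero

protected theorem map_add (hE : IsCondExp B E) (x y : R) : E (x + y) = E x + E y :=
  hE.toLinearMap.map_add x y

protected theorem map_sub (hE : IsCondExp B E) (x y : R) : E (x - y) = E x - E y :=
  hE.toLinearMap.map_sub x y

protected theorem map_smul (hE : IsCondExp B E) (c : ℂ) (x : R) : E (c • x) = c • E x :=
  hE.toLinearMap.map_smul c x

theorem map_real_smul (hE : IsCondExp B E) (r : ℝ) (x : R) : E (r • x) = r • E x := by
  simpa only [Complex.coe_smul] using hE.map_smul r x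

theorem map_nonneg (hE : IsCondExp B E) {x : R} (hx : 0 ≤ x) : 0 ≤ E x := hE.2.2.2.2.1 x hx

theorem norm_apply_le (hE : IsCondExp B E) (x : R) : ‖E x‖ ≤ ‖x‖ := hE.2.2.2.2.2.1 x

protected theorem continuous (hE : IsCondExp B E) : Continuous E :=
  AddMonoidHomClass.continuous_of_bound hE.toLinearMap 1 fun x ↦
    (one_mul ‖x‖).symm ▸ hE.norm_apply_le x

protected theorem monotone [StarRing R] [StarOrderedRing R] (hE : IsCondExp B E) : Monotone E :=
  fun x y hxy ↦ by
    simpa only [hE.map_sub, sub_nonneg] using hE.map_nonneg (sub_nonneg.2 hxy)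

end IsCondExp

/-- The set `J_K` of the paper. -/
def condExpIdeal {R : Type*} [Mul R] [Star R] (E : R → R) (K : Set R) : Set R :=
  {a | E (star a * a) ∈ K}

section condExpIdeal

variable {C : Type*} [NonUnitalCStarAlgebra C] {B N K : Set C} {E : C → C} {a : C}

theorem mem_condExpIdeal : a ∈ condExpIdeal E K ↔ E (star a * a) ∈ K := Iff.rfl

theorem mul_mem_condExpIdeal_right_of_mem (hNstar : ∀ n ∈ N, star n ∈ N)
    (hEinv : IsInvariantCondExp N E) (hKinv : InvariantUnder N K) (ha : a ∈ condExpIdeal E K)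
    {n : C} (hn : n ∈ N) : a * n ∈ condExpIdeal E K := by
  have h : star (a * n) * (a * n) = star n * (star a * a) * star (star n) := by
    simp only [star_mul, star_star, mul_assoc]
  simpa only [mem_condExpIdeal, h, hEinv _ (hNstar n hn)]
    using hKinv _ (hNstar n hn) _ ha

variable [PartialOrder C]

theorem zero_mem_condExpIdeal (hE : IsCondExp B E) (hK : IsIdealIn B K) :
    0 ∈ condExpIdeal E K := by
  simpa only [mem_condExpIdeal, mul_zero, hE.map_zero] using hK.zero_mem

theorem isClosed_condExpIdeal (hE : IsCondExp B E) (hK : IsIdealIn B K) :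
    IsClosed (condExpIdeal E K) :=
  hK.isClosed.preimage (hE.continuous.comp (by fun_prop))

theorem smul_mem_condExpIdeal (hB : IsCStarInclusion B) (hE : IsCondExp B E)
    (hK : IsIdealIn B K) (c : ℂ) (ha : a ∈ condExpIdeal E K) : c • a ∈ condExpIdeal E K := by
  have h : star (c • a) * (c • a) = (star c * c) • (star a * a) := by
    rw [star_smul, smul_mul_smul_comm]
  simpa only [mem_condExpIdeal, h, hE.map_smul] using hK.smul_mem hB _ ha

variable [StarOrderedRing C]

theorem mem_condExpIdeal_of_star_mul_self_le (hB : IsCStarInclusion B) (hE : IsCondExp B E)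
    (hK : IsIdealIn B K) {w : C} (haw : star a * a ≤ w) (hw : E w ∈ K) :
    a ∈ condExpIdeal E K :=
  mem_condExpIdeal.2 <| hK.mem_of_nonneg_of_le hB (hE.apply_mem _)
    (hE.map_nonneg (star_mul_self_nonneg a)) (hE.monotone haw) hw

theorem add_mem_condExpIdeal (hB : IsCStarInclusion B) (hE : IsCondExp B E)
    (hK : IsIdealIn B K) {b : C} (ha : a ∈ condExpIdeal E K) (hb : b ∈ condExpIdeal E K) :
    a + b ∈ condExpIdeal E K := by
  set p := star a * a + star b * b
  have hpar : star (a + b) * (a + b) + star (a - b) * (a - b) = p + p := by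
    simp only [p, star_add, star_sub]; noncomm_ring
  have hle : star (a + b) * (a + b) ≤ p + p :=
    hpar ▸ le_add_of_nonneg_right (star_mul_self_nonneg _)
  have hp : E p ∈ K := by simpa only [p, hE.map_add] using hK.add_mem ha hb
  exact mem_condExpIdeal_of_star_mul_self_le hB hE hK hle (hE.map_add p p ▸ hK.add_mem hp hp)

theorem mul_mem_condExpIdeal_left (hB : IsCStarInclusion B) (hE : IsCondExp B E)
    (hK : IsIdealIn B K) (x : C) (ha : a ∈ condExpIdeal E K) : x * a ∈ condExpIdeal E K := by
  have hle : star (x * a) * (x * a) ≤ ‖star x * x‖ • (star a * a) := by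
    simpa only [star_mul, mul_assoc] using
      CStarAlgebra.star_left_conjugate_le_norm_smul (a := a) (.star_mul_self x)
  exact mem_condExpIdeal_of_star_mul_self_le hB hE hK hle
    (hE.map_real_smul _ _ ▸ hK.real_smul_mem hB _ ha)

theorem mul_mem_condExpIdeal_right (hB : IsCStarInclusion B) (hE : IsCondExp B E)
    (hK : IsIdealIn B K) (hNstar : ∀ n ∈ N, star n ∈ N)
    (hNdense : closure (Submodule.span ℂ N : Set C) = Set.univ)
    (hEinv : IsInvariantCondExp N E) (hKinv : InvariantUnder N K)
    (ha : a ∈ condExpIdeal E K) (x : C) : a * x ∈ condExpIdeal E K := by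
  have hspan : (Submodule.span ℂ N : Set C) ⊆ (a * ·) ⁻¹' condExpIdeal E K := fun y hy ↦ by
    induction hy using Submodule.span_induction with
    | mem n hn => exact mul_mem_condExpIdeal_right_of_mem hNstar hEinv hKinv ha hn
    | zero => simpa only [Set.mem_preimage, mul_zero] using zero_mem_condExpIdeal hE hK
    | add y z _ _ hy hz =>
      simpa only [Set.mem_preimage, mul_add] using add_mem_condExpIdeal hB hE hK hy hz
    | smul c y _ hy =>
      simpa only [Set.mem_preimage, mul_smul_comm] using smul_mem_condExpIdeal hB hE hK c hy
  have hclosure := closure_minimal hspan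
    ((isClosed_condExpIdeal hE hK).preimage (continuous_const_mul a))
  exact hclosure (hNdense ▸ Set.mem_univ x)

theorem condExpIdeal_inter_eq (hB : IsCStarInclusion B) (hE : IsCondExp B E)
    (hK : IsIdealIn B K) : condExpIdeal E K ∩ B = K := by
  obtain ⟨-, -, hBmul, -, hBstar, -⟩ := hB.1
  refine Set.Subset.antisymm (fun b ⟨hbJ, hbB⟩ ↦ ?_) fun k hk ↦ ⟨?_, hK.subset hk⟩
  · have hbb : E (star b * b) = star b * b := hE.map_of_mem (hBmul _ (hBstar b hbB) _ hbB)
    exact hK.mem_of_star_mul_self_le hB hbB (hbb ▸ hbJ) (star_mul_self_nonneg b) le_rfl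
  · have hkk : star k * k ∈ K := hK.mul_mem_left (hBstar k (hK.subset hk)) hk
    simpa only [mem_condExpIdeal, hE.map_of_mem (hK.subset hkk)] using hkk

theorem isIdeal_condExpIdeal (hB : IsCStarInclusion B) (hE : IsCondExp B E)
    (hK : IsIdealIn B K) (hNstar : ∀ n ∈ N, star n ∈ N)
    (hNdense : closure (Submodule.span ℂ N : Set C) = Set.univ)
    (hEinv : IsInvariantCondExp N E) (hKinv : InvariantUnder N K) :
    IsIdeal (condExpIdeal E K) :=
  ⟨⟨zero_mem_condExpIdeal hE hK, fun _ ha _ hb ↦ add_mem_condExpIdeal hB hE hK ha hb,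
    fun x _ ha ↦ ⟨mul_mem_condExpIdeal_left hB hE hK x ha,
      mul_mem_condExpIdeal_right hB hE hK hNstar hNdense hEinv hKinv ha x⟩⟩,
    isClosed_condExpIdeal hE hK⟩

end condExpIdeal

noncomputable instance : NonUnitalCStarAlgebra A := {}

theorem JK_isIdeal_general {B N : Set A} (hB : IsRegularInclusion B)
    (hN : IsNormalizerSemigroup B N) (E : A → A) (hE : IsCondExp B E)
    (hEinv : IsInvariantCondExp N E)
    (K : Set A) (hK : IsIdealIn B K) (hKinv : InvariantUnder N K) :
    IsIdeal {a : A | E (star a * a) ∈ K} ∧ {a : A | E (star a * a) ∈ K} ∩ B = K := by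
  obtain ⟨hB, -⟩ := hB
  obtain ⟨-, hNstar, -, hNdense⟩ := hN
  exact ⟨isIdeal_condExpIdeal hB hE hK hNstar hNdense hEinv hKinv,
    condExpIdeal_inter_eq hB hE hK⟩

/-- If `K` is an `N`-invariant closed ideal of `B`, then
`J_K = {a ∈ A : E(a*a) ∈ K}` is a closed two-sided ideal of `A` with `J_K ∩ B = K`. -/
theorem JK_isIdeal {B N : Set A} (hB : IsRegularInclusion B)
    (hN : IsNormalizerSemigroup B N) (E : A → A) (hE : IsCondExp B E)
    (hEf : IsFaithful E) (hEinv : IsInvariantCondExp N E)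
    (K : Set A) (hK : IsIdealIn B K) (hKinv : InvariantUnder N K) :
    IsIdeal {a : A | E (star a * a) ∈ K} ∧ {a : A | E (star a * a) ∈ K} ∩ B = K :=
  JK_isIdeal_general hB hN E hE hEinv K hK hKinv
end

section
/- Let B ⊆ A be a regular inclusion of C*-algebras, N a *-semigroup of normalizers with dense span in A, and E : A → B a faithful N-invariant conditional expectation. Then a closed ideal K of B is N-invariant if and only if it is invariant under all normalizers of B in A. -/
variable {A : Type*} [NonUnitalNormedRing A] [StarRing A] [CStarRing A] [CompleteSpace A]
  [NormedSpace ℂ A] [IsScalarTower ℂ A A] [SMulCommClass ℂ A A] [StarModule ℂ A]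
  [PartialOrder A] [StarOrderedRing A]

section NInvariantAux

private lemma aux_smul_mem {B K : Set A} (hBs : IsCStarSubalgebra B)
    (hAU : ContainsApproxUnit B) (hK : IsIdealIn B K)
    (c : ℂ) {x : A} (hx : x ∈ K) : c • x ∈ K := by
  rcases eq_or_ne c 0 with rfl | hc
  · simpa using hK.2.1
  have hc0 : (0:ℝ) < ‖c‖ := norm_pos_iff.mpr hc
  rw [← hK.2.2.2.2.closure_eq, Metric.mem_closure_iff]
  intro ε hε
  obtain ⟨b, hbB, -, hb1, -⟩ := hAU x (ε / ‖c‖) (by positivity)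
  refine ⟨(c • b) * x, (hK.2.2.2.1 _ (hBs.2.2.2.1 c b hbB) x hx).1, ?_⟩
  rw [dist_eq_norm, smul_mul_assoc, ← smul_sub, norm_smul]
  calc ‖c‖ * ‖x - b * x‖ < ‖c‖ * (ε / ‖c‖) := by gcongr
    _ = ε := by rw [mul_comm]; exact div_mul_cancel₀ ε hc0.ne'

private lemma aux_sub_mem {B K : Set A} (hBs : IsCStarSubalgebra B)
    (hAU : ContainsApproxUnit B) (hK : IsIdealIn B K)
    {x y : A} (hx : x ∈ K) (hy : y ∈ K) : x - y ∈ K := by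
  have h := hK.2.2.1 x hx _ (aux_smul_mem hBs hAU hK (-1 : ℂ) hy)
  simpa [sub_eq_add_neg] using h

private lemma aux_rsmul_mem {B K : Set A} (hBs : IsCStarSubalgebra B)
    (hAU : ContainsApproxUnit B) (hK : IsIdealIn B K)
    (r : ℝ) {x : A} (hx : x ∈ K) : r • x ∈ K := by
  rw [← algebraMap_smul ℂ r x]
  exact aux_smul_mem hBs hAU hK _ hx

/-- The polynomial `t ↦ 1 - (1 - c t)^j`. -/
private def auxF (c : ℝ) (j : ℕ) : ℝ → ℝ := fun t => 1 - (1 - c * t) ^ j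

private lemma auxF_cont (c : ℝ) (j : ℕ) : Continuous (auxF c j) := by
  unfold auxF; fun_prop

private lemma auxF_zero (c : ℝ) (j : ℕ) : auxF c j 0 = 0 := by simp [auxF]

private lemma auxF_succ (c : ℝ) (j : ℕ) (t : ℝ) :
    auxF c (j+1) t = auxF c j t + (c * t - c * (t * auxF c j t)) := by
  simp only [auxF]; ring

set_option maxHeartbeats 2000000 in
private lemma aux_approx {B K : Set A} (hBs : IsCStarSubalgebra B)
    (hAU : ContainsApproxUnit B) (hK : IsIdealIn B K)
    (x : A) (hxx : x * star x ∈ K) :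
    ∀ ε > (0:ℝ), ∃ u ∈ K, ‖x - u * x‖ < ε := by
  letI : NonUnitalCStarAlgebra A := { }
  intro ε hε
  obtain ⟨h, hhdef⟩ : ∃ h : A, h = x * star x := ⟨_, rfl⟩
  rw [← hhdef] at hxx
  have hh0 : (0:A) ≤ h := hhdef ▸ mul_star_self_nonneg x
  have hhsa : IsSelfAdjoint h := .of_nonneg hh0
  obtain ⟨M, hMdef⟩ : ∃ M : ℝ, M = ‖h‖ := ⟨_, rfl⟩
  have hM0 : (0:ℝ) ≤ M := hMdef ▸ norm_nonneg h
  obtain ⟨c, hcdef⟩ : ∃ c : ℝ, c = (M + 1)⁻¹ := ⟨_, rfl⟩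
  have hc0 : (0:ℝ) < c := by rw [hcdef]; positivity
  have hMc : (M + 1) * c = 1 := by rw [hcdef]; exact mul_inv_cancel₀ (by positivity)
  have hspec : ∀ t ∈ quasispectrum ℝ h, 0 ≤ t ∧ t ≤ M := by
    intro t ht
    refine ⟨quasispectrum_nonneg_of_nonneg h hh0 t ht, ?_⟩
    calc t ≤ |t| := le_abs_self t
      _ = ‖(id t : ℝ)‖ := (Real.norm_eq_abs _).symm
      _ ≤ ‖cfcₙ (id : ℝ → ℝ) h‖ := norm_apply_le_norm_cfcₙ id h ht continuousOn_id rfl hhsa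
      _ = M := by rw [cfcₙ_id ℝ h, hMdef]
  obtain ⟨j, hjgt⟩ := exists_nat_gt (max 1 ((M + 1) / (ε * ε)))
  have hj1 : 1 ≤ (j:ℝ) := le_trans (le_max_left _ _) hjgt.le
  have hjpos : (0:ℝ) < (j:ℝ) := by linarith
  have hjK : cfcₙ (auxF c j) h ∈ K := by
    clear hjgt hj1 hjpos
    induction j with
    | zero =>
      have h0 : cfcₙ (auxF c 0) h = 0 := by
        have he : auxF c 0 = fun _ : ℝ => 0 := by funext t; simp [auxF]
        rw [he]
        exact cfcₙ_const_zero ℝ h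
      rw [h0]; exact hK.2.1
    | succ j ih =>
      have hFcont := auxF_cont c j
      have hFc : ContinuousOn (auxF c j) (quasispectrum ℝ h) := hFcont.continuousOn
      have hF0 : auxF c j 0 = 0 := auxF_zero c j
      have e1 : cfcₙ (fun t : ℝ => t * auxF c j t) h = h * cfcₙ (auxF c j) h :=
        calc cfcₙ (fun t : ℝ => t * auxF c j t) h
            = cfcₙ (fun t : ℝ => t) h * cfcₙ (auxF c j) h :=
              cfcₙ_mul _ _ h continuousOn_id rfl hFc hF0
          _ = h * cfcₙ (auxF c j) h := by rw [cfcₙ_id' ℝ h]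
      have e2 : cfcₙ (auxF c (j+1)) h
          = cfcₙ (auxF c j) h + (c • h - c • (h * cfcₙ (auxF c j) h)) := by
        have c2 : ContinuousOn (fun t : ℝ => c * t - c * (t * auxF c j t))
            (quasispectrum ℝ h) := Continuous.continuousOn (by fun_prop)
        have z2 : (fun t : ℝ => c * t - c * (t * auxF c j t)) 0 = 0 := by simp
        have c3 : ContinuousOn (fun t : ℝ => t * auxF c j t) (quasispectrum ℝ h) :=
          Continuous.continuousOn (by fun_prop)
        have z3 : (fun t : ℝ => t * auxF c j t) 0 = 0 := by simp
        calc cfcₙ (auxF c (j+1)) h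
            = cfcₙ (fun t : ℝ => auxF c j t + (c * t - c * (t * auxF c j t))) h :=
              cfcₙ_congr (fun t _ => auxF_succ c j t)
          _ = cfcₙ (auxF c j) h + cfcₙ (fun t : ℝ => c * t - c * (t * auxF c j t)) h :=
              cfcₙ_add _ _ h hFc hF0 c2 z2
          _ = cfcₙ (auxF c j) h
              + (cfcₙ (fun t : ℝ => c * t) h - cfcₙ (fun t : ℝ => c * (t * auxF c j t)) h) := by
              rw [cfcₙ_sub (fun t : ℝ => c * t) (fun t : ℝ => c * (t * auxF c j t)) h
                (by fun_prop) (by simp) (Continuous.continuousOn (by fun_prop)) (by simp)]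
          _ = cfcₙ (auxF c j) h + (c • h - c • (h * cfcₙ (auxF c j) h)) := by
              rw [cfcₙ_const_mul_id c h hhsa, cfcₙ_const_mul c _ h c3 z3, e1]
      rw [e2]
      have hhB : h ∈ B := hK.1 hxx
      exact hK.2.2.1 _ ih _ (aux_sub_mem hBs hAU hK (aux_rsmul_mem hBs hAU hK c hxx)
        (aux_rsmul_mem hBs hAU hK c ((hK.2.2.2.1 h hhB _ ih).1)))
  refine ⟨cfcₙ (auxF c j) h, hjK, ?_⟩
  have husa : IsSelfAdjoint (cfcₙ (auxF c j) h) := cfcₙ_predicate _ h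
  have hstar : star (x - cfcₙ (auxF c j) h * x) = star x - star x * cfcₙ (auxF c j) h := by
    rw [star_sub, star_mul, husa.star_eq]
  have hFcont := auxF_cont c j
  have hFc : ContinuousOn (auxF c j) (quasispectrum ℝ h) := hFcont.continuousOn
  have hF0 : auxF c j 0 = 0 := auxF_zero c j
  have e_uh : cfcₙ (fun t : ℝ => auxF c j t * t) h = cfcₙ (auxF c j) h * h :=
    calc cfcₙ (fun t : ℝ => auxF c j t * t) h
        = cfcₙ (auxF c j) h * cfcₙ (fun t : ℝ => t) h :=
          cfcₙ_mul _ _ h hFc hF0 continuousOn_id rfl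
      _ = cfcₙ (auxF c j) h * h := by rw [cfcₙ_id' ℝ h]
  have e_hu : cfcₙ (fun t : ℝ => t * auxF c j t) h = h * cfcₙ (auxF c j) h :=
    calc cfcₙ (fun t : ℝ => t * auxF c j t) h
        = cfcₙ (fun t : ℝ => t) h * cfcₙ (auxF c j) h :=
          cfcₙ_mul _ _ h continuousOn_id rfl hFc hF0
      _ = h * cfcₙ (auxF c j) h := by rw [cfcₙ_id' ℝ h]
  have e_uhu : cfcₙ (fun t : ℝ => auxF c j t * t * auxF c j t) h
      = cfcₙ (auxF c j) h * h * cfcₙ (auxF c j) h :=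
    calc cfcₙ (fun t : ℝ => auxF c j t * t * auxF c j t) h
        = cfcₙ (fun t : ℝ => auxF c j t * t) h * cfcₙ (auxF c j) h :=
          cfcₙ_mul _ _ h (Continuous.continuousOn (by fun_prop)) (by simp [auxF_zero]) hFc hF0
      _ = cfcₙ (auxF c j) h * h * cfcₙ (auxF c j) h := by rw [e_uh]
  have comb : cfcₙ (fun t : ℝ => (t - t * auxF c j t)
        - (auxF c j t * t - auxF c j t * t * auxF c j t)) h
      = (h - h * cfcₙ (auxF c j) h)
        - (cfcₙ (auxF c j) h * h - cfcₙ (auxF c j) h * h * cfcₙ (auxF c j) h) := by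
    rw [cfcₙ_sub (fun t : ℝ => t - t * auxF c j t)
        (fun t : ℝ => auxF c j t * t - auxF c j t * t * auxF c j t) h
        (Continuous.continuousOn (by fun_prop)) (by simp)
        (Continuous.continuousOn (by fun_prop)) (by simp [auxF_zero]),
      cfcₙ_sub (fun t : ℝ => t) (fun t : ℝ => t * auxF c j t) h
        continuousOn_id rfl (Continuous.continuousOn (by fun_prop)) (by simp),
      cfcₙ_sub (fun t : ℝ => auxF c j t * t) (fun t : ℝ => auxF c j t * t * auxF c j t) h
        (Continuous.continuousOn (by fun_prop)) (by simp [auxF_zero])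
        (Continuous.continuousOn (by fun_prop)) (by simp [auxF_zero]),
      cfcₙ_id' ℝ h, e_hu, e_uh, e_uhu]
  have hcalc : (x - cfcₙ (auxF c j) h * x) * star (x - cfcₙ (auxF c j) h * x)
      = cfcₙ (fun t : ℝ => (1 - c * t) ^ j * t * (1 - c * t) ^ j) h := by
    rw [hstar]
    calc (x - cfcₙ (auxF c j) h * x) * (star x - star x * cfcₙ (auxF c j) h)
        = (h - h * cfcₙ (auxF c j) h)
          - (cfcₙ (auxF c j) h * h - cfcₙ (auxF c j) h * h * cfcₙ (auxF c j) h) := by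
          rw [hhdef]; simp only [mul_sub, sub_mul, mul_assoc]; abel
      _ = cfcₙ (fun t : ℝ => (t - t * auxF c j t)
            - (auxF c j t * t - auxF c j t * t * auxF c j t)) h := comb.symm
      _ = cfcₙ (fun t : ℝ => (1 - c * t) ^ j * t * (1 - c * t) ^ j) h :=
          cfcₙ_congr (fun t _ => by simp only [auxF]; ring)
  have hnorm1 : ‖x - cfcₙ (auxF c j) h * x‖ * ‖x - cfcₙ (auxF c j) h * x‖ ≤ (M + 1) / j := by
    rw [← CStarRing.norm_self_mul_star, hcalc]
    refine norm_cfcₙ_le fun t ht => ?_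
    obtain ⟨ht0, htM⟩ := hspec t ht
    have hct1 : c * t < 1 := by
      have h1 : c * t ≤ c * M := mul_le_mul_of_nonneg_left htM hc0.le
      have h2 : c * M < c * (M + 1) := by
        have := mul_lt_mul_of_pos_left (show M < M + 1 by linarith) hc0
        exact this
      have h3 : c * (M + 1) = 1 := by rw [mul_comm]; exact hMc
      linarith
    have hs0 : (0:ℝ) ≤ c * t := mul_nonneg hc0.le ht0
    have hd0 : (0:ℝ) ≤ 1 - c * t := by linarith
    have hdj0 : (0:ℝ) ≤ (1 - c * t) ^ j := pow_nonneg hd0 j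
    have hdj1 : (1 - c * t) ^ j ≤ 1 := pow_le_one₀ hd0 (by linarith)
    have hval0 : (0:ℝ) ≤ (1 - c * t) ^ j * t * (1 - c * t) ^ j :=
      mul_nonneg (mul_nonneg hdj0 ht0) hdj0
    rw [Real.norm_eq_abs, abs_of_nonneg hval0]
    have hbern : 1 + (j:ℝ) * (c * t) ≤ (1 + c * t) ^ j := one_add_mul_le_pow (by linarith) j
    have hjct : (0:ℝ) < 1 + (j:ℝ) * (c * t) := by positivity
    have hprod : (1 - c * t) ^ j * (1 + (j:ℝ) * (c * t)) ≤ 1 := by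
      calc (1 - c * t) ^ j * (1 + (j:ℝ) * (c * t))
          ≤ (1 - c * t) ^ j * (1 + c * t) ^ j := mul_le_mul_of_nonneg_left hbern hdj0
        _ = ((1 - c * t) * (1 + c * t)) ^ j := (mul_pow _ _ j).symm
        _ ≤ 1 := pow_le_one₀ (by nlinarith) (by nlinarith)
    have hdj2 : (1 - c * t) ^ j ≤ 1 / (1 + (j:ℝ) * (c * t)) := by
      rw [le_div_iff₀ hjct]; exact hprod
    calc (1 - c * t) ^ j * t * (1 - c * t) ^ j
        ≤ (1 - c * t) ^ j * t * 1 :=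
          mul_le_mul_of_nonneg_left hdj1 (mul_nonneg hdj0 ht0)
      _ = t * (1 - c * t) ^ j := by ring
      _ ≤ t * (1 / (1 + (j:ℝ) * (c * t))) := mul_le_mul_of_nonneg_left hdj2 ht0
      _ ≤ (M + 1) / j := by
          rw [mul_one_div, div_le_div_iff₀ hjct hjpos]
          have expand : (M + 1) * ((j:ℝ) * (c * t)) = (j:ℝ) * t := by
            calc (M + 1) * ((j:ℝ) * (c * t)) = (j:ℝ) * (((M + 1) * c) * t) := by ring
              _ = (j:ℝ) * t := by rw [hMc, one_mul]
          nlinarith [expand]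
  have hultra : (M + 1) / j < ε * ε := by
    rw [div_lt_iff₀ hjpos]
    have h1 : (M + 1) / (ε * ε) < (j:ℝ) := lt_of_le_of_lt (le_max_right _ _) hjgt
    rw [div_lt_iff₀ (by positivity)] at h1
    nlinarith [h1]
  nlinarith [hnorm1, hultra, norm_nonneg (x - cfcₙ (auxF c j) h * x), hε]

end NInvariantAux

/-- In the presence of a faithful `N`-invariant conditional expectation, a closed
ideal `K` of `B` is `N`-invariant iff it is invariant under all normalizers of `B` in `A`. -/
theorem nInvariant_iff_invariant {B N : Set A} (hB : IsRegularInclusion B)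
    (hN : IsNormalizerSemigroup B N) (E : A → A) (hE : IsCondExp B E)
    (hEf : IsFaithful E) (hEinv : IsInvariantCondExp N E)
    (K : Set A) (hK : IsIdealIn B K) :
    InvariantUnder N K ↔ InvariantUnder {n | IsNormalizer B n} K := by
  obtain ⟨⟨hBsub, hBau⟩, -⟩ := hB
  constructor
  · intro hInv n hn k hk
    have hn' : IsNormalizer B n := hn
    have hkB : k ∈ B := hK.1 hk
    have hxB : n * k * star n ∈ B := hn'.1 k hkB
    set W : Submodule ℂ A := Submodule.span ℂ {y | ∃ u ∈ K, ∃ a : A, y = u * a} with hWdef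
    set Wc : Submodule ℂ A := W.topologicalClosure with hWcdef
    have hWcoe : (Wc : Set A) = closure (W : Set A) := Submodule.topologicalClosure_coe W
    -- generators
    have hgen : ∀ m ∈ N, ∀ k' ∈ K, m * (k' * star n) ∈ Wc := by
      intro m hm k' hk'
      have hcl : m * (k' * star n) ∈ closure (W : Set A) := by
        rw [Metric.mem_closure_iff]
        intro δ hδ
        have hx1 : (m * k') * star (m * k') ∈ K := by
          have h1 : k' * star k' ∈ K :=
            (hK.2.2.2.1 (star k') (hBsub.2.2.2.2.1 k' (hK.1 hk')) k' hk').2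
          have h2 := hInv m hm _ h1
          have heq : (m * k') * star (m * k') = m * (k' * star k') * star m := by
            rw [star_mul]; simp only [mul_assoc]
          rw [heq]; exact h2
        obtain ⟨u, huK, hu⟩ := aux_approx hBsub hBau hK (m * k') hx1
          (δ / (‖star n‖ + 1)) (by positivity)
        refine ⟨u * (m * (k' * star n)), Submodule.subset_span ⟨u, huK, m * (k' * star n), rfl⟩, ?_⟩
        rw [dist_eq_norm]
        have heq2 : m * (k' * star n) - u * (m * (k' * star n))
            = (m * k' - u * (m * k')) * star n := by
          simp only [sub_mul, mul_assoc]
        rw [heq2]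
        calc ‖(m * k' - u * (m * k')) * star n‖
            ≤ ‖m * k' - u * (m * k')‖ * ‖star n‖ := norm_mul_le _ _
          _ ≤ ‖m * k' - u * (m * k')‖ * (‖star n‖ + 1) := by
              have := norm_nonneg (m * k' - u * (m * k'))
              nlinarith [norm_nonneg (star n)]
          _ < (δ / (‖star n‖ + 1)) * (‖star n‖ + 1) :=
              mul_lt_mul_of_pos_right hu (by positivity)
          _ = δ := div_mul_cancel₀ δ (by positivity)
      rw [← hWcoe] at hcl
      exact hcl
    -- span
    have hspan : ∀ a ∈ Submodule.span ℂ N, a * (k * star n) ∈ Wc := by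
      intro a ha
      refine Submodule.span_induction
        (p := fun a _ => a * (k * star n) ∈ Wc) ?_ ?_ ?_ ?_ ha
      · exact fun m hm => hgen m hm k hk
      · simpa using Wc.zero_mem
      · intro y z _ _ hy hz
        rw [add_mul]; exact Wc.add_mem hy hz
      · intro c y _ hy
        rw [smul_mul_assoc]; exact Wc.smul_mem c hy
    -- limit
    have hmem : n * k * star n ∈ (Wc : Set A) := by
      have hnc : n ∈ closure (Submodule.span ℂ N : Set A) := by
        rw [hN.2.2.2]; trivial
      have hcont : Continuous (fun a : A => a * (k * star n)) :=
        continuous_id.mul continuous_const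
      have hmap : Set.MapsTo (fun a : A => a * (k * star n))
          (Submodule.span ℂ N : Set A) (Wc : Set A) := fun a ha => hspan a ha
      have h1 := map_mem_closure hcont hnc hmap
      have hWclosed : IsClosed (Wc : Set A) := hWcdef ▸ W.isClosed_topologicalClosure
      rw [hWclosed.closure_eq] at h1
      simpa [mul_assoc] using h1
    -- conditional expectation
    have hsub : ∀ a b : A, E (a - b) = E a - E b := by
      intro a b
      have h1 : a - b = a + (-1 : ℂ) • b := by simp [sub_eq_add_neg]
      rw [h1, hE.2.2.1, hE.2.2.2.1]; simp [sub_eq_add_neg]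
    have hEcont : Continuous E := by
      have hlip : LipschitzWith 1 E := LipschitzWith.of_dist_le_mul (fun a b => by
        rw [dist_eq_norm, dist_eq_norm, ← hsub]
        simpa using hE.2.2.2.2.2.1 (a - b))
      exact hlip.continuous
    have hE0 : E 0 = 0 := by
      have h00 := hE.2.2.1 0 0
      rw [add_zero] at h00
      exact (left_eq_add.mp h00)
    have hmapsto : Set.MapsTo E (W : Set A) K := by
      intro y hy
      refine Submodule.span_induction (p := fun y _ => E y ∈ K) ?_ ?_ ?_ ?_ hy
      · rintro y ⟨u, huK, a, rfl⟩
        rw [(hE.2.2.2.2.2.2 u (hK.1 huK) a).1]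
        exact (hK.2.2.2.1 (E a) (hE.1 a) u huK).2
      · show E (0:A) ∈ K
        rw [hE0]; exact hK.2.1
      · intro y z _ _ hy hz
        rw [hE.2.2.1 y z]; exact hK.2.2.1 _ hy _ hz
      · intro c y _ hy
        rw [hE.2.2.2.1 c y]; exact aux_smul_mem hBsub hBau hK c hy
    have hEK : E (n * k * star n) ∈ K := by
      have h1 : n * k * star n ∈ closure (W : Set A) := hWcoe ▸ hmem
      have h2 := map_mem_closure hEcont h1 hmapsto
      rwa [hK.2.2.2.2.closure_eq] at h2
    rwa [hE.2.1 _ hxB] at hEK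
  · intro hInv m hm k hk
    exact hInv m (hN.1 m hm) k hk
end

section
/- Let B ⊆ A be a regular inclusion of C*-algebras with the regular ideal intersection property, and E : A → B a faithful conditional expectation. If J is a regular ideal of A, then J ∩ B = E(J). -/
variable {A : Type*} [NonUnitalNormedRing A] [StarRing A] [CStarRing A] [CompleteSpace A]
  [NormedSpace ℂ A] [IsScalarTower ℂ A A] [SMulCommClass ℂ A A] [StarModule ℂ A]
  [PartialOrder A] [StarOrderedRing A]

section Aux

lemma aux_mem_ann {A : Type*} [NonUnitalNonAssocSemiring A] {X : Set A} {a : A} :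
    a ∈ ann X ↔ ∀ x ∈ X, a * x = 0 ∧ x * a = 0 := Iff.rfl

lemma aux_subset_ann_ann {A : Type*} [NonUnitalNonAssocSemiring A] (X : Set A) :
    X ⊆ ann (ann X) := fun x hx u hu => ⟨(hu x hx).2, (hu x hx).1⟩

lemma aux_ann_anti {A : Type*} [NonUnitalNonAssocSemiring A] {X Y : Set A} (h : X ⊆ Y) :
    ann Y ⊆ ann X := fun a ha x hx => ha x (h hx)

lemma aux_ann_ann_ann {A : Type*} [NonUnitalNonAssocSemiring A] (X : Set A) :
    ann (ann (ann X)) = ann X :=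
  Set.Subset.antisymm (aux_ann_anti (aux_subset_ann_ann X)) (aux_subset_ann_ann (ann X))

lemma aux_isClosed_ann {A : Type*} [NonUnitalNormedRing A] (X : Set A) :
    IsClosed (ann X) := by
  have : ann X = ⋂ x ∈ X, ({a : A | a * x = 0} ∩ {a : A | x * a = 0}) := by
    ext a
    simp only [ann, Set.mem_setOf_eq, Set.mem_iInter, Set.mem_inter_iff]
  rw [this]
  exact isClosed_biInter fun x _ =>
    (isClosed_eq (continuous_id.mul continuous_const) continuous_const).inter
      (isClosed_eq (continuous_const.mul continuous_id) continuous_const)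

lemma aux_isIdeal_ann {A : Type*} [NonUnitalNormedRing A] {X : Set A}
    (hX : IsAlgIdeal X) : IsIdeal (ann X) := by
  refine ⟨⟨fun x _ => by simp, ?_, ?_⟩, aux_isClosed_ann X⟩
  · intro u hu v hv x hx
    constructor
    · rw [add_mul, (hu x hx).1, (hv x hx).1, add_zero]
    · rw [mul_add, (hu x hx).2, (hv x hx).2, add_zero]
  · intro r u hu
    constructor
    · intro x hx
      refine ⟨by rw [mul_assoc, (hu x hx).1, mul_zero], ?_⟩
      rw [← mul_assoc, (hu (x * r) (hX.2.2 r x hx).2).2]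
    · intro x hx
      refine ⟨?_, by rw [← mul_assoc, (hu x hx).2, zero_mul]⟩
      rw [mul_assoc, (hu (r * x) (hX.2.2 r x hx).1).1]

variable {A : Type*} [NonUnitalNormedRing A] [StarRing A] [CStarRing A] [CompleteSpace A]
  [NormedSpace ℂ A] [IsScalarTower ℂ A A] [SMulCommClass ℂ A A] [StarModule ℂ A]
  [PartialOrder A] [StarOrderedRing A]

/-- The key annihilation lemma: if `b` annihilates `L ∩ B` for a regular ideal `L`,
then `b` annihilates all of `L`. -/
lemma aux_key {B : Set A}
    (hBmul : ∀ x ∈ B, ∀ y ∈ B, x * y ∈ B) (hBstar : ∀ x ∈ B, star x ∈ B)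
    (hdense : closure (Submodule.span ℂ {n | IsNormalizer B n} : Set A) = Set.univ)
    (hRIIP : HasRIIP B)
    (L : Set A) (hL : IsIdeal L) (hLr : ann (ann L) = L)
    (b : A) (hb : ∀ k ∈ L ∩ B, b * k = 0 ∧ k * b = 0) :
    ∀ y ∈ L, b * y = 0 ∧ y * b = 0 := by
  -- Step 1: `b` annihilates `A · d` and `d · A` for selfadjoint `d ∈ L ∩ B`.
  have P2 : ∀ d, d ∈ L → d ∈ B → star d = d →
      ∀ a : A, b * a * d = 0 ∧ d * a * b = 0 := by
    intro d hdL hdB hdsa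
    have hd2L : d * d ∈ L := (hL.1.2.2 d d hdL).1
    have hd2B : d * d ∈ B := hBmul d hdB d hdB
    have hN : ∀ n, IsNormalizer B n → b * n * d = 0 ∧ d * n * b = 0 := by
      intro n hn
      constructor
      · -- use ‖v * v*‖ = ‖v‖²
        have hk : n * (d * d) * star n ∈ L ∩ B :=
          ⟨(hL.1.2.2 (star n) (n * (d * d)) (hL.1.2.2 n (d * d) hd2L).1).2, hn.1 _ hd2B⟩
        have hv : (b * n * d) * star (b * n * d) = (b * (n * (d * d) * star n)) * star b := by
          simp only [star_mul, hdsa, mul_assoc]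
        rw [(hb _ hk).1, zero_mul] at hv
        have hnv : ‖(b * n * d) * star (b * n * d)‖ = ‖b * n * d‖ * ‖b * n * d‖ :=
          CStarRing.norm_self_mul_star
        rw [hv, norm_zero] at hnv
        exact norm_eq_zero.mp (mul_self_eq_zero.mp hnv.symm)
      · have hk : star n * (d * d) * n ∈ L ∩ B :=
          ⟨(hL.1.2.2 n (star n * (d * d)) (hL.1.2.2 (star n) (d * d) hd2L).1).2, hn.2 _ hd2B⟩
        have hksa : star (star n * (d * d) * n) = star n * (d * d) * n := by
          simp only [star_mul, star_star, hdsa, mul_assoc]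
        have hbk : star b * (star n * (d * d) * n) = 0 := by
          rw [← hksa, ← star_mul, (hb _ hk).2, star_zero]
        have hw : star (d * n * b) * (d * n * b) = (star b * (star n * (d * d) * n)) * b := by
          simp only [star_mul, hdsa, mul_assoc]
        rw [hbk, zero_mul] at hw
        have hnw : ‖star (d * n * b) * (d * n * b)‖ = ‖d * n * b‖ * ‖d * n * b‖ :=
          CStarRing.norm_star_mul_self
        rw [hw, norm_zero] at hnw
        exact norm_eq_zero.mp (mul_self_eq_zero.mp hnw.symm)
    -- extend by linearity and density
    intro a
    let S : Submodule ℂ A :=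
      { carrier := {a : A | b * a * d = 0 ∧ d * a * b = 0}
        add_mem' := by
          intro x y hx hy
          constructor
          · rw [mul_add, add_mul, hx.1, hy.1, add_zero]
          · rw [mul_add, add_mul, hx.2, hy.2, add_zero]
        zero_mem' := by constructor <;> rw [mul_zero, zero_mul]
        smul_mem' := by
          intro c x hx
          constructor
          · rw [mul_smul_comm, smul_mul_assoc, hx.1, smul_zero]
          · rw [mul_smul_comm, smul_mul_assoc, hx.2, smul_zero] }
    have hSclosed : IsClosed (S : Set A) := by
      have : (S : Set A) = {a : A | b * a * d = 0} ∩ {a : A | d * a * b = 0} := rfl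
      rw [this]
      exact (isClosed_eq (((continuous_const.mul continuous_id).mul continuous_const))
              continuous_const).inter
        (isClosed_eq (((continuous_const.mul continuous_id).mul continuous_const))
          continuous_const)
    have h1 : {n : A | IsNormalizer B n} ⊆ (S : Set A) := fun n hn => (hN n hn)
    have h2 : (Submodule.span ℂ {n : A | IsNormalizer B n} : Set A) ⊆ (S : Set A) :=
      Submodule.span_le.mpr h1
    have h3 : closure (Submodule.span ℂ {n : A | IsNormalizer B n} : Set A) ⊆ (S : Set A) :=
      closure_minimal h2 hSclosed
    have ha : a ∈ closure (Submodule.span ℂ {n : A | IsNormalizer B n} : Set A) := by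
      rw [hdense]; trivial
    exact h3 ha
  -- Step 2: a contradiction machine via the RIIP.
  have CONTRA : ∀ z ∈ L, (∀ d, d ∈ L → d ∈ B → star d = d →
      d * z = 0 ∧ z * d = 0 ∧ (∀ a, d * (a * z) = 0) ∧ (∀ a, z * a * d = 0)) → z = 0 := by
    intro z hzL hzprop
    by_contra hzne
    set H : Set A := ⋂₀ {I : Set A | IsIdeal I ∧ z ∈ I} with hHdef
    have hHz : z ∈ H := fun I hI => hI.2
    have hHideal : IsIdeal H := by
      refine ⟨⟨fun I hI => hI.1.1.1, ?_, ?_⟩, isClosed_sInter fun I hI => hI.1.2⟩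
      · intro x hx y hy I hI
        exact hI.1.1.2.1 x (hx I hI) y (hy I hI)
      · intro a x hx
        exact ⟨fun I hI => (hI.1.1.2.2 a x (hx I hI)).1,
               fun I hI => (hI.1.1.2.2 a x (hx I hI)).2⟩
    have hHL : H ⊆ L := Set.sInter_subset_of_mem ⟨hL, hzL⟩
    set M : Set A := ann (ann H) with hMdef
    have hMideal : IsIdeal M := aux_isIdeal_ann (aux_isIdeal_ann hHideal.1).1
    have hMreg : IsRegularIdeal M := ⟨hMideal, (aux_ann_ann_ann (ann H)).symm⟩
    have hzM : z ∈ M := aux_subset_ann_ann H hHz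
    have hMne : M ≠ {0} := by
      intro h
      rw [h] at hzM
      exact hzne hzM
    obtain ⟨c, ⟨hcM, hcB⟩, hcne⟩ := hRIIP M hMreg hMne
    set d : A := star c * c with hddef
    have hdB : d ∈ B := hBmul _ (hBstar _ hcB) _ hcB
    have hdM : d ∈ M := (hMideal.1.2.2 (star c) c hcM).1
    have hML : M ⊆ L := by
      have h1 : ann (ann H) ⊆ ann (ann L) := aux_ann_anti (aux_ann_anti hHL)
      rw [hLr] at h1
      exact h1
    have hdL : d ∈ L := hML hdM
    have hdsa : star d = d := by rw [hddef, star_mul, star_star]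
    obtain ⟨h1, h2, h3, h4⟩ := hzprop d hdL hdB hdsa
    set I₀ : Set A := {x : A | d * x = 0 ∧ x * d = 0 ∧
        (∀ a, d * (a * x) = 0) ∧ (∀ a, x * a * d = 0)} with hI₀def
    have hI₀ideal : IsIdeal I₀ := by
      constructor
      · refine ⟨⟨by rw [mul_zero], by rw [zero_mul],
          fun a => by rw [mul_zero, mul_zero], fun a => by rw [zero_mul, zero_mul]⟩, ?_, ?_⟩
        · intro x hx y hy
          refine ⟨by rw [mul_add, hx.1, hy.1, add_zero],
                  by rw [add_mul, hx.2.1, hy.2.1, add_zero],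
                  fun a => by rw [mul_add, mul_add, hx.2.2.1 a, hy.2.2.1 a, add_zero],
                  fun a => by rw [add_mul, add_mul, hx.2.2.2 a, hy.2.2.2 a, add_zero]⟩
        · intro r x hx
          constructor
          · refine ⟨hx.2.2.1 r, by rw [mul_assoc, hx.2.1, mul_zero],
              fun a => by rw [← mul_assoc a r x]; exact hx.2.2.1 (a * r), fun a => ?_⟩
            rw [mul_assoc r x a, mul_assoc r (x * a) d, hx.2.2.2 a, mul_zero]
          · refine ⟨by rw [← mul_assoc, hx.1, zero_mul],
              hx.2.2.2 r, fun a => ?_, fun a => ?_⟩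
            · rw [← mul_assoc a x r, ← mul_assoc d (a * x) r, hx.2.2.1 a, zero_mul]
            · rw [mul_assoc x r a]; exact hx.2.2.2 (r * a)
      · have : I₀ = {x : A | d * x = 0} ∩ ({x : A | x * d = 0} ∩
            ((⋂ a : A, {x : A | d * (a * x) = 0}) ∩ (⋂ a : A, {x : A | x * a * d = 0}))) := by
          ext x
          simp only [hI₀def, Set.mem_setOf_eq, Set.mem_inter_iff, Set.mem_iInter]
        rw [this]
        refine (isClosed_eq (continuous_const.mul continuous_id) continuous_const).inter
          ((isClosed_eq (continuous_id.mul continuous_const) continuous_const).inter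
            ((isClosed_iInter fun a => isClosed_eq
                (continuous_const.mul (continuous_const.mul continuous_id)) continuous_const).inter
             (isClosed_iInter fun a => isClosed_eq
                ((continuous_id.mul continuous_const).mul continuous_const) continuous_const)))
    have hzI₀ : z ∈ I₀ := ⟨h1, h2, h3, h4⟩
    have hHI₀ : H ⊆ I₀ := Set.sInter_subset_of_mem ⟨hI₀ideal, hzI₀⟩
    have hdannH : d ∈ ann H := fun x hx => ⟨(hHI₀ hx).1, (hHI₀ hx).2.1⟩
    have hdd : d * d = 0 := (hdM d hdannH).1
    have hd0 : d = 0 := by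
      have : star d * d = 0 := by rw [hdsa, hdd]
      exact (CStarRing.star_mul_self_eq_zero_iff d).mp this
    have : star c * c = 0 := by rw [← hddef, hd0]
    exact hcne ((CStarRing.star_mul_self_eq_zero_iff c).mp this)
  -- Step 3: conclude.
  intro y hy
  constructor
  · refine CONTRA (b * y) (hL.1.2.2 b y hy).1 ?_
    intro d hdL hdB hdsa
    have P2d := P2 d hdL hdB hdsa
    refine ⟨?_, (P2d y).1, fun a => ?_, fun a => ?_⟩
    · rw [← mul_assoc, (hb d ⟨hdL, hdB⟩).2, zero_mul]
    · rw [← mul_assoc a b y, ← mul_assoc d (a * b) y, ← mul_assoc d a b, (P2d a).2, zero_mul]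
    · rw [mul_assoc b y a]; exact (P2d (y * a)).1
  · refine CONTRA (y * b) (hL.1.2.2 b y hy).2 ?_
    intro d hdL hdB hdsa
    have P2d := P2 d hdL hdB hdsa
    refine ⟨?_, ?_, fun a => ?_, fun a => ?_⟩
    · rw [← mul_assoc]; exact (P2d y).2
    · rw [mul_assoc, (hb d ⟨hdL, hdB⟩).1, mul_zero]
    · rw [← mul_assoc a y b, ← mul_assoc d (a * y) b]; exact (P2d (a * y)).2
    · rw [mul_assoc y b a, mul_assoc y (b * a) d, (P2d a).1, mul_zero]

end Aux

/-- If `B ⊆ A` is a regular inclusion with the regular ideal intersection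
property and `E` is a faithful conditional expectation, then `J ∩ B = E(J)` for every
regular ideal `J` of `A`. -/
theorem inter_eq_image_of_regular {B : Set A} (hB : IsRegularInclusion B)
    (hRIIP : HasRIIP B) (E : A → A) (hE : IsCondExp B E) (hEf : IsFaithful E)
    (J : Set A) (hJ : IsRegularIdeal J) :
    J ∩ B = E '' J := by
  obtain ⟨⟨⟨hB0, hBadd, hBmul, hBsmul, hBstar, hBclosed⟩, hBapprox⟩, hdense⟩ := hB
  obtain ⟨hErange, hEid, hEadd, hEsmul, hEpos, hEnorm, hEmod⟩ := hE
  have hE0 : E 0 = 0 := by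
    have := hEsmul 0 0
    rwa [zero_smul, zero_smul] at this
  apply Set.Subset.antisymm
  · rintro x ⟨hxJ, hxB⟩
    exact ⟨x, hxJ, hEid x hxB⟩
  · rintro _ ⟨j, hj, rfl⟩
    refine Set.mem_inter ?_ (hErange j)
    -- show `E j ∈ J = ann (ann J)`
    have hb : ∀ k ∈ ann J ∩ B, E j * k = 0 ∧ k * E j = 0 := by
      rintro k ⟨hkJ, hkB⟩
      constructor
      · rw [← (hEmod k hkB j).2, (hkJ j hj).2, hE0]
      · rw [← (hEmod k hkB j).1, (hkJ j hj).1, hE0]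
    have hkey := aux_key hBmul hBstar hdense hRIIP (ann J)
      (aux_isIdeal_ann hJ.1.1) (aux_ann_ann_ann J) (E j) hb
    have : E j ∈ ann (ann J) := fun y hy => hkey y hy
    rw [← hJ.2] at this
    exact this
end

section
/- Let Γ be a discrete group acting topologically freely by homeomorphisms on a compact Hausdorff space X. If Y ⊆ X is a Γ-invariant closed set that is regular (Y equals the closure of its interior), then the restricted action of Γ on Y is topologically free. -/
/-- An action of a group `Γ` on a space `X` is topologically free if the fixed-point set
of each non-identity element has empty interior. -/
def TopologicallyFree (Γ X : Type*) [Group Γ] [TopologicalSpace X] [MulAction Γ X] : Prop :=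
  ∀ t : Γ, t ≠ 1 → interior {x : X | t • x = x} = (∅ : Set X)

/-- If a discrete group `Γ` acts topologically freely by homeomorphisms on a
compact Hausdorff space `X` and `Y ⊆ X` is a `Γ`-invariant regular closed set (`Y` is the
closure of its interior), then the restricted action of `Γ` on `Y` is topologically free. -/
theorem restrict_topologicallyFree {Γ X : Type*} [Group Γ] [TopologicalSpace X]
    [CompactSpace X] [T2Space X] [MulAction Γ X] [ContinuousConstSMul Γ X]
    (hfree : TopologicallyFree Γ X)
    (Y : Set X) (hYclosed : IsClosed Y) (hYreg : Y = closure (interior Y))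
    (hYinv : ∀ t : Γ, (fun x => t • x) '' Y = Y) :
    ∀ t : Γ, t ≠ 1 → interior {y : Y | t • (y : X) = (y : X)} = (∅ : Set Y) := by
  intro t ht
  rw [Set.eq_empty_iff_forall_notMem]
  intro y hy
  obtain ⟨U, hU, hUeq⟩ := isOpen_induced_iff.mp
    (isOpen_interior (s := {y : Y | t • (y : X) = (y : X)}))
  have hy' : y ∈ ((↑) : Y → X) ⁻¹' U := by rw [hUeq]; exact hy
  have hsub : U ∩ Y ⊆ {x : X | t • x = x} := by
    rintro z ⟨hzU, hzY⟩
    have hmem : (⟨z, hzY⟩ : Y) ∈ interior {y : Y | t • (y : X) = (y : X)} := by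
      rw [← hUeq]; exact hzU
    have h2 := interior_subset hmem
    exact h2
  have hmeet : (U ∩ interior Y).Nonempty := by
    have hyY : (y : X) ∈ closure (interior Y) := hYreg ▸ y.2
    exact mem_closure_iff.mp hyY U hU hy'
  have hopen : IsOpen (U ∩ interior Y) := hU.inter isOpen_interior
  have hsub2 : U ∩ interior Y ⊆ interior {x : X | t • x = x} :=
    interior_maximal (fun z hz => hsub ⟨hz.1, interior_subset hz.2⟩) hopen
  rw [hfree t ht] at hsub2
  obtain ⟨z, hz⟩ := hmeet
  exact hsub2 hz
end

section
/- Let A be a C*-algebra whose only closed two-sided ideals are {0}, a fixed proper nonzero ideal K which is not regular, and A itself (e.g., A = B(H) for infinite-dimensional separable H, K the compact operators). If B ⊆ A is any C*-subalgebra with B ∩ K = {0} and B ≠ {0} containing the unit, then the inclusion B ⊆ A has the regular ideal intersection property but not the ideal intersection property. -/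
/-- Let `A` be a unital C*-algebra whose only closed two-sided ideals are
`{0}`, a fixed proper nonzero non-regular ideal `K`, and `A` itself (e.g. `A = B(H)`,
`K = K(H)`).  If `B` is a C*-subalgebra containing the unit with `B ∩ K = {0}`, then
`B ⊆ A` has the regular ideal intersection property but not the ideal intersection
property. -/
theorem riip_not_iip {A : Type*} [NormedRing A] [StarRing A] [CStarRing A]
    [CompleteSpace A] [NormedAlgebra ℂ A] [StarModule ℂ A] [NormOneClass A]
    (K : Set A) (hK : IsIdeal K) (hK0 : K ≠ {0}) (hKtop : K ≠ Set.univ)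
    (hKirr : ¬ IsRegularIdeal K)
    (honly : ∀ J : Set A, IsIdeal J → J = {0} ∨ J = K ∨ J = Set.univ)
    (B : Set A) (hB0 : (0 : A) ∈ B) (hBadd : ∀ x ∈ B, ∀ y ∈ B, x + y ∈ B)
    (hBmul : ∀ x ∈ B, ∀ y ∈ B, x * y ∈ B) (hBsmul : ∀ (c : ℂ), ∀ x ∈ B, c • x ∈ B)
    (hBstar : ∀ x ∈ B, star x ∈ B) (hBclosed : IsClosed B) (hB1 : (1 : A) ∈ B)
    (hBK : B ∩ K = {0}) :
    (∀ J : Set A, IsRegularIdeal J → J ≠ {0} → ∃ x ∈ J ∩ B, x ≠ 0) ∧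
    ¬ (∀ J : Set A, IsIdeal J → J ≠ {0} → ∃ x ∈ J ∩ B, x ≠ 0) := by
  have h10 : (1 : A) ≠ 0 := by
    intro h
    have := norm_one (α := A)
    rw [h, norm_zero] at this
    norm_num at this
  constructor
  · intro J hJ hJ0
    rcases honly J hJ.1 with h | h | h
    · exact absurd h hJ0
    · exact absurd (h ▸ hJ) hKirr
    · exact ⟨1, ⟨h ▸ Set.mem_univ 1, hB1⟩, h10⟩
  · intro h
    obtain ⟨x, ⟨hxK, hxB⟩, hx⟩ := h K hK hK0
    apply hx
    have : x ∈ B ∩ K := ⟨hxB, hxK⟩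
    rw [hBK] at this
    exact this
end
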